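/- Let G = (V, E) be a finite directed graph with n + 1 vertices and a designated source s ∈ V from which every vertex is reachable. Let d be one plus the maximum hop-distance from s to any other vertex. Then ℓ(G, s) ≥ 2^{n − d}; equivalently, n − d ≤ log₂ ℓ(G, s), where ℓ(G, s) is the number of linearizations of (G, s). -/

import Mathlib

variable {V : Type*}

/-- `p` is a directed walk from `s` to `v` in the digraph with edge relation `E`:
`p` is the (nonempty) list of visited vertices, starting at `s`, ending at `v`,
and each consecutive pair of vertices is an edge. -/
def IsWalk (E : V → V → Prop) (s v : V) (p : List V) : Prop :=
  p.Chain' E ∧ p.head? = some s ∧ p.getLast? = some v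

/-- `v` is reachable from `s` by a directed walk. -/
def DiReachable (E : V → V → Prop) (s v : V) : Prop :=
  ∃ p, IsWalk E s v p

/-- Hop-distance from `s` to `v`: the minimum number of edges on a directed path
(equivalently, walk) from `s` to `v`.  A walk on `k + 1` vertices has `k` edges. -/
noncomputable def hopDist (E : V → V → Prop) (s v : V) : ℕ :=
  sInf {k | ∃ p, IsWalk E s v p ∧ p.length = k + 1}

/-- The total weight of a walk `p` under the edge weighting `w`:
the sum of `w` over the consecutive pairs of vertices of `p`. -/
def walkWeight (w : V → V → ℝ) (p : List V) : ℝ :=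
  ((p.zip p.tail).map fun e => w e.1 e.2).sum

/-- Weighted distance from `s` to `v` under the weighting `w`:
the minimum total weight of a directed path from `s` to `v`. -/
noncomputable def weightedDist (E : V → V → Prop) (w : V → V → ℝ) (s v : V) : ℝ :=
  sInf {c | ∃ p, IsWalk E s v p ∧ p.Nodup ∧ walkWeight w p = c}

/-- `L` is a linearization of `(G, s)`: `L` is a linear ordering (a duplicate-free list)
of `V \ {s}`, and there exists a positive edge weighting `w` of `G` such that the weighted
distances from `s` of all vertices `≠ s` are pairwise distinct and `L` lists `V \ {s}`
in increasing order of weighted distance from `s`. -/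
def IsLinearization (E : V → V → Prop) (s : V) (L : List V) : Prop :=
  L.Nodup ∧ (∀ v, v ∈ L ↔ v ≠ s) ∧
  ∃ w : V → V → ℝ,
    (∀ u v, E u v → 0 < w u v) ∧
    (∀ x, x ≠ s → ∀ y, y ≠ s → x ≠ y →
      weightedDist E w s x ≠ weightedDist E w s y) ∧
    L.Pairwise (fun x y => weightedDist E w s x < weightedDist E w s y)

/-- `ℓ(G, s)`: the number of linearizations of `(G, s)`. -/
noncomputable def numLinearizations (E : V → V → Prop) (s : V) : ℕ :=
  {L : List V | IsLinearization E s L}.ncard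

/-- `T` is a spanning arborescence of `(G, s)`: a subset of the edges of `G` such that
every vertex `v ≠ s` is reachable from `s` in `T` and has exactly one incoming `T`-edge,
and `s` has no incoming `T`-edge. -/
def IsArborescence (E T : V → V → Prop) (s : V) : Prop :=
  (∀ u v, T u v → E u v) ∧
  (∀ u, ¬ T u s) ∧
  (∀ v, v ≠ s → DiReachable T s v ∧ ∃! u, T u v)

section Aux
variable {E : V → V → Prop} {s : V}

lemma IsWalk.ne_nil {v : V} {p : List V} (h : IsWalk E s v p) : p ≠ [] := by
  rintro rfl; simp [IsWalk] at h

lemma isWalk_singleton (E : V → V → Prop) (s : V) : IsWalk E s s [s] :=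
  ⟨List.isChain_singleton s, rfl, rfl⟩

lemma IsWalk.append_edge {u v : V} {p : List V} (h : IsWalk E s u p) (he : E u v) :
    IsWalk E s v (p ++ [v]) := by
  obtain ⟨hc, hh, hl⟩ := h
  have hpne : p ≠ [] := by rintro rfl; simp at hh
  refine ⟨?_, ?_, ?_⟩
  · unfold List.Chain'
    rw [List.isChain_append]
    refine ⟨hc, List.isChain_singleton _, ?_⟩
    intro x hx y hy
    rw [hl] at hx
    simp at hx hy
    subst hx; subst hy; exact he
  · rw [List.head?_append_of_ne_nil _ hpne]; exact hh
  · simp [List.getLast?_concat]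

lemma IsWalk.eq_concat {v : V} {p : List V} (h : IsWalk E s v p) (hp : 2 ≤ p.length) :
    ∃ q u, p = q ++ [v] ∧ IsWalk E s u q ∧ E u v ∧ q.length + 1 = p.length := by
  obtain ⟨hc, hh, hl⟩ := h
  have hpne : p ≠ [] := by rintro rfl; simp at hh
  have hdecomp : p = p.dropLast ++ [p.getLast hpne] := (List.dropLast_append_getLast hpne).symm
  have hlast : p.getLast hpne = v := by
    have := List.getLast?_eq_getLast hpne
    rw [hl] at this; exact (Option.some_injective _ this.symm)
  set q := p.dropLast with hq
  have hqne : q ≠ [] := by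
    have : q.length = p.length - 1 := List.length_dropLast
    intro h0; rw [h0] at this; simp at this; omega
  have hchain : q.Chain' E ∧ ∀ x ∈ q.getLast?, ∀ y ∈ ([v] : List V).head?, E x y := by
    have := hc
    unfold List.Chain' at this
    rw [hdecomp, hlast, List.isChain_append] at this
    exact ⟨this.1, this.2.2⟩
  set u := q.getLast hqne with hu
  refine ⟨q, u, by rw [← hlast]; exact hdecomp, ⟨hchain.1, ?_, List.getLast?_eq_getLast hqne⟩, ?_, ?_⟩
  · rw [← hh, hdecomp, hlast, List.head?_append_of_ne_nil _ hqne]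
  · exact hchain.2 u (List.getLast?_eq_getLast hqne ▸ rfl) v rfl
  · have : q.length = p.length - 1 := List.length_dropLast
    omega

lemma hopDist_le {v : V} {p : List V} (h : IsWalk E s v p) : hopDist E s v ≤ p.length - 1 := by
  have hpne := h.ne_nil
  have : p.length - 1 ∈ {k | ∃ p, IsWalk E s v p ∧ p.length = k + 1} := by
    refine ⟨p, h, ?_⟩
    have : p.length ≠ 0 := by simpa using List.length_pos_iff.mpr hpne |>.ne'
    omega
  exact Nat.sInf_le this

lemma exists_min_walk {v : V} (h : DiReachable E s v) :
    ∃ p, IsWalk E s v p ∧ p.length = hopDist E s v + 1 := by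
  obtain ⟨p, hp⟩ := h
  have hne : {k | ∃ p, IsWalk E s v p ∧ p.length = k + 1}.Nonempty := by
    refine ⟨p.length - 1, p, hp, ?_⟩
    have : p.length ≠ 0 := by simpa using List.length_pos_iff.mpr hp.ne_nil |>.ne'
    omega
  exact Nat.sInf_mem hne

lemma hopDist_self : hopDist E s s = 0 :=
  Nat.le_zero.mp (by simpa using hopDist_le (isWalk_singleton E s))

lemma eq_of_hopDist_eq_zero {v : V} (h : DiReachable E s v) (h0 : hopDist E s v = 0) : v = s := by
  obtain ⟨p, hp, hlen⟩ := exists_min_walk h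
  rw [h0] at hlen
  obtain ⟨a, rfl⟩ := List.length_eq_one_iff.mp hlen
  obtain ⟨_, hh, hl⟩ := hp
  simp at hh hl
  rw [← hh, ← hl]

end Aux

section Aux2
variable {E : V → V → Prop} {s : V}

lemma exists_geodesic (hreach : ∀ v, DiReachable E s v) (v : V) :
    ∃ p : List V, IsWalk E s v p ∧ p.length = hopDist E s v + 1 ∧
      ∀ i (h : i < p.length), hopDist E s (p.get ⟨i, h⟩) = i := by
  suffices H : ∀ k (v : V), hopDist E s v = k →
      ∃ p : List V, IsWalk E s v p ∧ p.length = hopDist E s v + 1 ∧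
        ∀ i (h : i < p.length), hopDist E s (p.get ⟨i, h⟩) = i from
    H (hopDist E s v) v rfl
  intro k
  induction k using Nat.strong_induction_on with
  | _ k ih =>
    intro v hk
    match k, hk with
    | 0, hk =>
      have hvs : v = s := eq_of_hopDist_eq_zero (hreach v) hk
      rw [hvs]
      refine ⟨[s], isWalk_singleton E s, by simp [hopDist_self], ?_⟩
      intro i hi
      simp only [List.length_singleton] at hi
      have hi0 : i = 0 := by omega
      subst hi0
      simpa using hopDist_self
    | (m+1), hk =>
      obtain ⟨p, hp, hlen⟩ := exists_min_walk (hreach v)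
      rw [hk] at hlen
      obtain ⟨q, u, hpq, hqwalk, he, hqlen⟩ := hp.eq_concat (by omega)
      have hqlen' : q.length = m + 1 := by omega
      have hule : hopDist E s u ≤ m := by
        have := hopDist_le hqwalk; omega
      have huge : hopDist E s u = m := by
        by_contra hne
        have hlt : hopDist E s u < m := lt_of_le_of_ne hule hne
        obtain ⟨q', hq', hq'len⟩ := exists_min_walk (hreach u)
        have hwalk' : IsWalk E s v (q' ++ [v]) := hq'.append_edge he
        have := hopDist_le hwalk'
        rw [List.length_append, hq'len] at this
        simp at this
        omega
      obtain ⟨r, hr, hrlen, hridx⟩ := ih m (by omega) u huge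
      rw [huge] at hrlen
      refine ⟨r ++ [v], hr.append_edge he, by simp [hrlen, hk], ?_⟩
      intro i hi
      have hlen2 : (r ++ [v]).length = m + 2 := by simp [hrlen]
      rcases Nat.lt_or_ge i (m+1) with hilt | hige
      · have hget : (r ++ [v]).get ⟨i, hi⟩ = r.get ⟨i, by omega⟩ := by
          have e1 : (r ++ [v]).get ⟨i, hi⟩ = (r ++ [v])[i]'hi := rfl
          have e2 : r.get ⟨i, by omega⟩ = r[i]'(by omega) := rfl
          rw [e1, e2]
          exact List.getElem_append_left (by omega)
        rw [hget]
        exact hridx i (by omega)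
      · have hieq : i = m + 1 := by omega
        subst hieq
        have hget : (r ++ [v]).get ⟨m + 1, hi⟩ = v := by
          have e1 : (r ++ [v]).get ⟨m + 1, hi⟩ = (r ++ [v])[m+1]'hi := rfl
          rw [e1, List.getElem_append_right (by omega)]
          simp [hrlen]
        rw [hget, hk]

lemma walkWeight_cons_cons (w : V → V → ℝ) (a b : V) (t : List V) :
    walkWeight w (a :: b :: t) = w a b + walkWeight w (b :: t) := by
  simp [walkWeight]

lemma le_walkWeight (f : V → ℝ) (w : V → V → ℝ) (hw : ∀ u v, f v - f u ≤ w u v) :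
    ∀ p : List V, ∀ x y : V, p.head? = some x → p.getLast? = some y →
      f y - f x ≤ walkWeight w p := by
  intro p
  induction p with
  | nil => intro x y hx; simp at hx
  | cons a t ih =>
    intro x y hx hy
    simp at hx
    subst hx
    cases t with
    | nil =>
      simp at hy
      subst hy
      simp [walkWeight]
    | cons b t' =>
      rw [List.getLast?_cons_cons] at hy
      have h1 := ih b y rfl hy
      rw [walkWeight_cons_cons]
      have h2 := hw a b
      linarith

lemma walkWeight_eq_of_chain (f : V → ℝ) (w : V → V → ℝ) :
    ∀ p : List V, p.Chain' (fun u v => w u v = f v - f u) →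
    ∀ x y : V, p.head? = some x → p.getLast? = some y →
      walkWeight w p = f y - f x := by
  intro p
  induction p with
  | nil => intro _ x y hx; simp at hx
  | cons a t ih =>
    intro hc x y hx hy
    simp at hx
    subst hx
    cases t with
    | nil =>
      simp at hy
      subst hy
      simp [walkWeight]
    | cons b t' =>
      unfold List.Chain' at hc
      rw [List.isChain_cons_cons] at hc
      rw [List.getLast?_cons_cons] at hy
      have h1 := ih hc.2 b y rfl hy
      rw [walkWeight_cons_cons, h1, hc.1]
      ring

lemma weightedDist_eq_key (hreach : ∀ v, DiReachable E s v)
    (key : V → ℝ) (δ : ℝ) (hδ : 0 < δ) (hks : key s = 0)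
    (hstep : ∀ u v : V, hopDist E s v = hopDist E s u + 1 → δ ≤ key v - key u)
    (x : V) :
    weightedDist E (fun u v => max (key v - key u) δ) s x = key x := by
  set w : V → V → ℝ := fun u v => max (key v - key u) δ with hw
  have hlow : ∀ u v, key v - key u ≤ w u v := fun u v => le_max_left _ _
  -- membership: geodesic walk
  obtain ⟨p, hpwalk, hplen, hpidx⟩ := exists_geodesic hreach x
  have hpnodup : p.Nodup := by
    rw [List.nodup_iff_injective_get]
    intro i j hij
    have h1 := hpidx i i.2
    have h2 := hpidx j j.2
    apply Fin.ext
    rw [← h1, ← h2]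
    congr 1
  have hchain : p.Chain' (fun u v => w u v = key v - key u) := by
    unfold List.Chain'
    rw [List.isChain_iff_getElem]
    intro i hi
    have hst := hstep (p.get ⟨i, by omega⟩) (p.get ⟨i+1, by omega⟩)
      (by simp only [hpidx])
    simp only [hw]
    exact max_eq_left hst
  have hweight : walkWeight w p = key x := by
    rw [walkWeight_eq_of_chain key w p hchain s x hpwalk.2.1 hpwalk.2.2, hks]
    ring
  have hmem : key x ∈ {c | ∃ p, IsWalk E s x p ∧ p.Nodup ∧ walkWeight w p = c} :=
    ⟨p, hpwalk, hpnodup, hweight⟩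
  have hlb : ∀ c ∈ {c | ∃ p, IsWalk E s x p ∧ p.Nodup ∧ walkWeight w p = c}, key x ≤ c := by
    rintro c ⟨q, hq, _, rfl⟩
    have := le_walkWeight key w hlow q s x hq.2.1 hq.2.2
    rw [hks] at this
    linarith
  exact le_antisymm (csInf_le ⟨key x, hlb⟩ hmem) (le_csInf ⟨key x, hmem⟩ hlb)

end Aux2

lemma hopDist_card_bound [Fintype V] {E : V → V → Prop} {s : V}
    (hreach : ∀ v, DiReachable E s v) (v : V) :
    hopDist E s v + 1 ≤ Fintype.card V := by
  obtain ⟨p, hp, hlen, hidx⟩ := exists_geodesic hreach v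
  have hnd : p.Nodup := by
    rw [List.nodup_iff_injective_get]
    intro i j hij
    apply Fin.ext
    rw [← hidx i i.2, ← hidx j j.2]
    congr 1
  rw [← hlen]
  exact hnd.length_le_card

noncomputable def keySort [Fintype V] (s : V) (f : V → ℝ) (hf : Function.Injective f) :
    List V :=
  letI : DecidableEq V := Classical.decEq V
  @Finset.sort V (Finset.univ.erase s) (fun x y => f x ≤ f y) (Classical.decRel _)
    ⟨fun _ _ _ => le_trans⟩ ⟨fun _ _ h1 h2 => hf (le_antisymm h1 h2)⟩
    ⟨fun _ _ => le_total _ _⟩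

lemma mem_keySort [Fintype V] {s : V} {f : V → ℝ} {hf : Function.Injective f} {v : V} :
    v ∈ keySort s f hf ↔ v ≠ s := by
  letI : DecidableEq V := Classical.decEq V
  letI : DecidableRel (fun x y : V => f x ≤ f y) := Classical.decRel _
  haveI : IsTrans V (fun x y : V => f x ≤ f y) := ⟨fun _ _ _ => le_trans⟩
  haveI : IsAntisymm V (fun x y : V => f x ≤ f y) := ⟨fun _ _ h1 h2 => hf (le_antisymm h1 h2)⟩
  haveI : IsTotal V (fun x y : V => f x ≤ f y) := ⟨fun _ _ => le_total _ _⟩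
  rw [keySort, Finset.mem_sort]
  simp

lemma nodup_keySort [Fintype V] (s : V) (f : V → ℝ) (hf : Function.Injective f) :
    (keySort s f hf).Nodup := by
  letI : DecidableEq V := Classical.decEq V
  letI : DecidableRel (fun x y : V => f x ≤ f y) := Classical.decRel _
  haveI : IsTrans V (fun x y : V => f x ≤ f y) := ⟨fun _ _ _ => le_trans⟩
  haveI : IsAntisymm V (fun x y : V => f x ≤ f y) := ⟨fun _ _ h1 h2 => hf (le_antisymm h1 h2)⟩
  haveI : IsTotal V (fun x y : V => f x ≤ f y) := ⟨fun _ _ => le_total _ _⟩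
  rw [keySort]
  exact Finset.sort_nodup _ _

lemma pairwise_keySort [Fintype V] (s : V) (f : V → ℝ) (hf : Function.Injective f) :
    (keySort s f hf).Pairwise (fun x y => f x < f y) := by
  letI : DecidableEq V := Classical.decEq V
  letI : DecidableRel (fun x y : V => f x ≤ f y) := Classical.decRel _
  haveI : IsTrans V (fun x y : V => f x ≤ f y) := ⟨fun _ _ _ => le_trans⟩
  haveI : IsAntisymm V (fun x y : V => f x ≤ f y) := ⟨fun _ _ h1 h2 => hf (le_antisymm h1 h2)⟩
  haveI : IsTotal V (fun x y : V => f x ≤ f y) := ⟨fun _ _ => le_total _ _⟩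
  have h1 : (keySort s f hf).Pairwise (fun x y => f x ≤ f y) := by
    rw [keySort]
    exact Finset.pairwise_sort _ _
  have h2 : (keySort s f hf).Pairwise (fun x y => x ≠ y) := nodup_keySort s f hf
  exact (h1.and h2).imp (fun h => lt_of_le_of_ne h.1 (fun e => h.2 (hf e)))

lemma isLinearization_keySort [Fintype V] (E : V → V → Prop) (s : V)
    (hreach : ∀ v, DiReachable E s v)
    (key : V → ℝ) (hinj : Function.Injective key) (δ : ℝ) (hδ : 0 < δ) (hks : key s = 0)
    (hstep : ∀ u v : V, hopDist E s v = hopDist E s u + 1 → δ ≤ key v - key u) :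
    IsLinearization E s (keySort s key hinj) := by
  refine ⟨nodup_keySort s key hinj, fun v => mem_keySort,
    fun u v => max (key v - key u) δ,
    fun u v _ => lt_of_lt_of_le hδ (le_max_right _ _), ?_, ?_⟩
  · intro x _ y _ hxy
    rw [weightedDist_eq_key hreach key δ hδ hks hstep x,
        weightedDist_eq_key hreach key δ hδ hks hstep y]
    exact fun h => hxy (hinj h)
  · refine (pairwise_keySort s key hinj).imp ?_
    intro a b hab
    rwa [weightedDist_eq_key hreach key δ hδ hks hstep a,
        weightedDist_eq_key hreach key δ hδ hks hstep b]

lemma pairwise_order_agree {L : List V} {P Q : V → V → Prop}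
    (hP : L.Pairwise P) (hQ : L.Pairwise Q)
    {x y : V} (hx : x ∈ L) (hy : y ∈ L) (hxy : x ≠ y) :
    (P x y ∧ Q x y) ∨ (P y x ∧ Q y x) := by
  have hsym : Symmetric (fun a b => (P a b ∧ Q a b) ∨ (P b a ∧ Q b a)) := by
    intro a b h; tauto
  letI : Std.Symm (fun a b => (P a b ∧ Q a b) ∨ (P b a ∧ Q b a)) := ⟨fun a b h => hsym h⟩
  exact List.Pairwise.forall (R := fun a b => (P a b ∧ Q a b) ∨ (P b a ∧ Q b a))
    ((hP.and hQ).imp Or.inl) hx hy hxy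


/--
Let `G = (V, E)` be a finite directed graph with `n + 1` vertices and a
designated source `s` from which every vertex is reachable.  Let `d` be one plus the
maximum hop-distance from `s` to any other vertex.  Then `ℓ(G, s) ≥ 2 ^ (n − d)`
(equivalently, `n − d ≤ log₂ ℓ(G, s)`).
-/
theorem numLinearizations_ge_two_pow
    [Fintype V] (E : V → V → Prop) (s : V)
    (hreach : ∀ v, DiReachable E s v)
    (n d : ℕ) (hn : Fintype.card V = n + 1)
    (hd : d = 1 + sSup {k | ∃ v, v ≠ s ∧ hopDist E s v = k}) :
    numLinearizations E s ≥ 2 ^ (n - d) := by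
  classical
  set N := Fintype.card V with hN
  set rk : V → ℕ := fun v => (Fintype.equivFin V v : ℕ) with hrk
  have hrk_inj : Function.Injective rk := fun a b h =>
    (Fintype.equivFin V).injective (Fin.ext h)
  have hrk_lt : ∀ v, rk v < N := fun v => (Fintype.equivFin V v).2
  set W : Finset V := Finset.univ.filter
    (fun v => v ≠ s ∧ ∃ u, u ≠ s ∧ hopDist E s u = hopDist E s v ∧ rk u < rk v) with hW
  have hmemW : ∀ v, v ∈ W ↔
      (v ≠ s ∧ ∃ u, u ≠ s ∧ hopDist E s u = hopDist E s v ∧ rk u < rk v) := by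
    intro v; simp [hW]
  set M : ℝ := 2 * ((N : ℝ) + 1) with hM
  have hM0 : (0:ℝ) < M := by positivity
  set ε : (↥W → Bool) → V → ℝ := fun b v =>
    if h : v ∈ W then ((rk v + 1 : ℝ)/M) * (if b ⟨v, h⟩ then 1 else -1) else 0 with hε
  set key : (↥W → Bool) → V → ℝ := fun b v => (hopDist E s v : ℝ) + ε b v with hkey
  have hεnotW : ∀ b v, v ∉ W → ε b v = 0 := by
    intro b v h; simp [hε, h]
  have hεW : ∀ b v (h : v ∈ W),
      ε b v = ((rk v + 1 : ℝ)/M) * (if b ⟨v, h⟩ then 1 else -1) := by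
    intro b v h; simp [hε, h]
  have hsnotW : s ∉ W := by
    intro h; exact ((hmemW s).mp h).1 rfl
  have hεabsW : ∀ b v (h : v ∈ W), |ε b v| = ((rk v : ℝ) + 1)/M := by
    intro b v h
    rw [hεW b v h, abs_mul]
    have h1 : |(if b ⟨v, h⟩ then (1:ℝ) else -1)| = 1 := by
      by_cases hb : b ⟨v, h⟩ <;> simp [hb]
    rw [h1, mul_one, abs_of_nonneg (by positivity)]
  have hεabs : ∀ b v, |ε b v| ≤ (N : ℝ) / M := by
    intro b v
    by_cases h : v ∈ W
    · rw [hεabsW b v h]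
      have h2 : ((rk v : ℝ) + 1) ≤ N := by
        have := hrk_lt v; exact_mod_cast this
      gcongr
    · rw [hεnotW b v h]; simp; positivity
  have hhalf : (N : ℝ) / M < 1 / 2 := by
    rw [hM, div_lt_iff₀ (by positivity)]
    nlinarith [Nat.cast_nonneg (α := ℝ) N]
  -- key injectivity
  have hkeyinj : ∀ b, Function.Injective (key b) := by
    intro b x y hxy
    simp only [hkey] at hxy
    have hεx := hεabs b x
    have hεy := hεabs b y
    have habsx := abs_le.mp hεx
    have habsy := abs_le.mp hεy
    have hhopxy : hopDist E s x = hopDist E s y := by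
      have h2 : |((hopDist E s x : ℝ)) - hopDist E s y| < 1 := by
        have : ((hopDist E s x : ℝ)) - hopDist E s y = ε b y - ε b x := by linarith
        rw [this, abs_sub_comm] at *
        calc |ε b x - ε b y| ≤ |ε b x| + |ε b y| := abs_sub _ _
          _ < 1 := by linarith
      have h3 := abs_lt.mp h2
      have h4 : ((hopDist E s x : ℝ)) < hopDist E s y + 1 := by linarith
      have h5 : ((hopDist E s y : ℝ)) < hopDist E s x + 1 := by linarith
      have h6 : hopDist E s x < hopDist E s y + 1 := by exact_mod_cast h4
      have h7 : hopDist E s y < hopDist E s x + 1 := by exact_mod_cast h5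
      omega
    have hεxy : ε b x = ε b y := by
      rw [hhopxy] at hxy; linarith
    by_cases hx : x ∈ W <;> by_cases hy : y ∈ W
    · have h1 : ((rk x : ℝ) + 1)/M = ((rk y : ℝ) + 1)/M := by
        rw [← hεabsW b x hx, ← hεabsW b y hy, hεxy]
      field_simp at h1
      exact hrk_inj (by exact_mod_cast add_right_cancel h1)
    · exfalso
      have hpos : (0:ℝ) < ((rk x : ℝ) + 1)/M := by positivity
      have h0 : |ε b x| = ((rk x : ℝ) + 1)/M := hεabsW b x hx
      rw [hεxy, hεnotW b y hy, abs_zero] at h0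
      linarith
    · exfalso
      have hpos : (0:ℝ) < ((rk y : ℝ) + 1)/M := by positivity
      have h0 : |ε b y| = ((rk y : ℝ) + 1)/M := hεabsW b y hy
      rw [← hεxy, hεnotW b x hx, abs_zero] at h0
      linarith
    · by_cases hxs : x = s
      · have h0 : hopDist E s y = 0 := by rw [← hhopxy, hxs, hopDist_self]
        rw [hxs]
        exact (eq_of_hopDist_eq_zero (hreach y) h0).symm
      by_cases hys : y = s
      · have h0 : hopDist E s x = 0 := by rw [hhopxy, hys, hopDist_self]
        rw [hys]
        exact eq_of_hopDist_eq_zero (hreach x) h0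
      have hnx := (hmemW x).not.mp hx
      have hny := (hmemW y).not.mp hy
      push_neg at hnx hny
      have h1 := hny hys x hxs hhopxy
      have h2 := hnx hxs y hys hhopxy.symm
      exact hrk_inj (by omega)
  -- δ, hks, hstep
  set δ : ℝ := 1 - 2 * ((N : ℝ)/M) with hδdef
  have hδ : 0 < δ := by rw [hδdef]; linarith
  have hks : ∀ b, key b s = 0 := by
    intro b
    simp [hkey, hopDist_self, hεnotW b s hsnotW]
  have hstep : ∀ b (u v : V), hopDist E s v = hopDist E s u + 1 → δ ≤ key b v - key b u := by
    intro b u v h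
    simp only [hkey, h]
    have h1 := abs_le.mp (hεabs b u)
    have h2 := abs_le.mp (hεabs b v)
    push_cast
    rw [hδdef]
    linarith
  -- the map
  set Φ : (↥W → Bool) → List V := fun b => keySort s (key b) (hkeyinj b) with hΦ
  have hlin : ∀ b, IsLinearization E s (Φ b) :=
    fun b => isLinearization_keySort E s hreach (key b) (hkeyinj b) δ hδ (hks b) (hstep b)
  -- injectivity of Φ
  have hΦinj : Function.Injective Φ := by
    intro b b' hbb'
    by_contra hne
    have : ∃ x, b x ≠ b' x := by
      by_contra h; push_neg at h; exact hne (funext h)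
    obtain ⟨⟨v, hvW⟩, hbv⟩ := this
    have hvprop := (hmemW v).mp hvW
    set A : Finset V := Finset.univ.filter
      (fun u => u ≠ s ∧ hopDist E s u = hopDist E s v) with hA
    have hvA : v ∈ A := by simp [hA]; exact hvprop.1
    obtain ⟨u₀, hu₀A, hu₀min⟩ := Finset.exists_min_image A rk ⟨v, hvA⟩
    have hu₀ : u₀ ≠ s ∧ hopDist E s u₀ = hopDist E s v := by simpa [hA] using hu₀A
    have hu₀W : u₀ ∉ W := by
      intro h
      obtain ⟨_, u', hu's, hu'hop, hu'lt⟩ := (hmemW u₀).mp h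
      have hu'A : u' ∈ A := by simp [hA]; exact ⟨hu's, hu'hop.trans hu₀.2⟩
      have := hu₀min u' hu'A
      omega
    have hu₀v : u₀ ≠ v := by
      obtain ⟨-, u', hu's, hu'hop, hu'lt⟩ := hvprop
      have hu'A : u' ∈ A := by simp [hA]; exact ⟨hu's, hu'hop⟩
      have := hu₀min u' hu'A
      intro h; rw [h] at this; omega
    have hdiff : ∀ c : ↥W → Bool, key c v - key c u₀ = ε c v := by
      intro c
      simp only [hkey, hu₀.2, hεnotW c u₀ hu₀W]
      ring
    have hsign : ∀ c : ↥W → Bool, (0 < ε c v ↔ c ⟨v, hvW⟩ = true) := by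
      intro c
      rw [hεW c v hvW]
      have hpos : (0:ℝ) < ((rk v : ℝ) + 1)/M := by positivity
      by_cases hb : c ⟨v, hvW⟩ <;> simp [hb] <;> nlinarith
    have hP : (Φ b).Pairwise (fun x y => key b x < key b y) :=
      pairwise_keySort s (key b) (hkeyinj b)
    have hQ : (Φ b).Pairwise (fun x y => key b' x < key b' y) := by
      rw [hbb']; exact pairwise_keySort s (key b') (hkeyinj b')
    have hvmem : v ∈ Φ b := mem_keySort.mpr hvprop.1
    have humem : u₀ ∈ Φ b := mem_keySort.mpr hu₀.1
    rcases pairwise_order_agree hP hQ hvmem humem (fun h => hu₀v h.symm) with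
      ⟨h1, h2⟩ | ⟨h1, h2⟩
    · have e1 : ¬ (0 < ε b v) := by have := hdiff b; linarith
      have e2 : ¬ (0 < ε b' v) := by have := hdiff b'; linarith
      rw [hsign b] at e1
      rw [hsign b'] at e2
      rw [Bool.not_eq_true] at e1 e2
      rw [e1, e2] at hbv
      exact hbv rfl
    · have e1 : 0 < ε b v := by have := hdiff b; linarith
      have e2 : 0 < ε b' v := by have := hdiff b'; linarith
      rw [hsign b] at e1
      rw [hsign b'] at e2
      rw [e1, e2] at hbv
      exact hbv rfl
  -- counting
  have hfin : {L : List V | IsLinearization E s L}.Finite := by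
    apply Set.Finite.subset (List.finite_length_le V N)
    intro L hL
    simpa [hN] using hL.1.length_le_card
  have hsub : Set.range Φ ⊆ {L : List V | IsLinearization E s L} := by
    rintro _ ⟨b, rfl⟩; exact hlin b
  have h1 : (Set.range Φ).ncard ≤ numLinearizations E s :=
    Set.ncard_le_ncard hsub hfin
  have h2 : (Set.range Φ).ncard = 2 ^ W.card := by
    rw [← Nat.card_coe_set_eq, Nat.card_range_of_injective hΦinj, Nat.card_fun,
      Nat.card_eq_fintype_card, Nat.card_eq_fintype_card, Fintype.card_coe,
      Fintype.card_bool]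
  -- W.card ≥ n - d
  have hWsub : W ⊆ Finset.univ.erase s := by
    intro v hv
    rw [Finset.mem_erase]
    exact ⟨((hmemW v).mp hv).1, Finset.mem_univ v⟩
  set C : Finset V := Finset.univ.erase s \ W with hC
  have hcardsplit : W.card + C.card = n := by
    rw [hC, Finset.card_sdiff_of_subset hWsub, Finset.card_erase_of_mem (Finset.mem_univ s),
      Finset.card_univ]
    have := Finset.card_le_card hWsub
    rw [Finset.card_erase_of_mem (Finset.mem_univ s), Finset.card_univ] at this
    omega
  have hCbound : C.card ≤ d - 1 := by
    have hmap : ∀ v ∈ C, hopDist E s v ∈ Finset.Ico 1 d := by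
      intro v hv
      rw [hC, Finset.mem_sdiff, Finset.mem_erase] at hv
      obtain ⟨⟨hvs, -⟩, hvW⟩ := hv
      rw [Finset.mem_Ico]
      constructor
      · rcases Nat.eq_zero_or_pos (hopDist E s v) with h0 | h0
        · exact absurd (eq_of_hopDist_eq_zero (hreach v) h0) hvs
        · exact h0
      · have hbdd : BddAbove {k | ∃ v, v ≠ s ∧ hopDist E s v = k} := by
          refine ⟨N, ?_⟩
          rintro k ⟨u, -, rfl⟩
          have := hopDist_card_bound hreach u
          omega
        have hmem : hopDist E s v ∈ {k | ∃ v, v ≠ s ∧ hopDist E s v = k} := ⟨v, hvs, rfl⟩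
        have := le_csSup hbdd hmem
        omega
    have hinj : Set.InjOn (fun v => hopDist E s v) C := by
      intro v₁ hv₁ v₂ hv₂ heq
      simp only at heq
      by_contra hne
      rw [hC, Finset.mem_coe, Finset.mem_sdiff, Finset.mem_erase] at hv₁ hv₂
      rcases lt_trichotomy (rk v₁) (rk v₂) with hlt | heq2 | hgt
      · exact hv₂.2 ((hmemW v₂).mpr ⟨hv₂.1.1, v₁, hv₁.1.1, heq, hlt⟩)
      · exact hne (hrk_inj heq2)
      · exact hv₁.2 ((hmemW v₁).mpr ⟨hv₁.1.1, v₂, hv₂.1.1, heq.symm, hgt⟩)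
    have := Finset.card_le_card_of_injOn (fun v => hopDist E s v) hmap hinj
    simpa [Nat.card_Ico] using this
  calc 2 ^ (n - d) ≤ 2 ^ W.card := Nat.pow_le_pow_right (by norm_num) (by omega)
    _ = (Set.range Φ).ncard := h2.symm
    _ ≤ numLinearizations E s := h1
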